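/- Let E be a row-finite graph. The graph E has a cycle with an exit if and only if there exists a ∈ M_E^{gr} and a negative integer n such that ^n a > a, i.e., ^n a = a + x for some nonzero x. -/

import Mathlib

set_option linter.unusedSectionVars false

/-- The algebraic preorder on a commutative monoid: `a ≤ b` iff `b = a + c` for some `c`. -/
def algLE {M : Type*} [AddCommMonoid M] (a b : M) : Prop := ∃ c, b = a + c

/-- A row-finite directed graph: vertices `V`, edges `Ed`, source `s`, range `r`,
and for each vertex the (finite) set of edges it emits. -/
structure RFGraph (V : Type) (Ed : Type) where
  s : Ed → V
  r : Ed → V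
  emit : V → Finset Ed
  mem_emit : ∀ e v, e ∈ emit v ↔ s e = v

namespace RFGraph

variable {V Ed : Type} [DecidableEq V] (G : RFGraph V Ed)

/-- The one-step rewriting relation `→₁` on the free commutative monoid `Multiset V`:
replace one occurrence of a non-sink vertex `v` by the sum of ranges of edges emitted by `v`. -/
def Step1 (a b : Multiset V) : Prop :=
  ∃ v : V, v ∈ a ∧ G.emit v ≠ ∅ ∧ b = a.erase v + (G.emit v).val.map G.r

/-- The reflexive-transitive closure `→` of `→₁`. -/
def Step : Multiset V → Multiset V → Prop := Relation.ReflTransGen G.Step1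

/-- The congruence on the free commutative monoid generated by `→₁`. -/
def gcon : AddCon (Multiset V) := addConGen G.Step1

/-- The graph monoid `M_E`. -/
def GM := G.gcon.Quotient

instance : AddCommMonoid G.GM := inferInstanceAs (AddCommMonoid G.gcon.Quotient)

/-- One-step rewriting for the talented monoid: replace `v(i)` by `Σ_{e ∈ s⁻¹(v)} r(e)(i+1)`. -/
def TStep1 (a b : Multiset (V × ℤ)) : Prop :=
  ∃ (v : V) (i : ℤ), (v, i) ∈ a ∧ G.emit v ≠ ∅ ∧
    b = a.erase (v, i) + (G.emit v).val.map (fun e => (G.r e, i + 1))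

/-- The congruence generated by the talented one-step relation. -/
def tcon : AddCon (Multiset (V × ℤ)) := addConGen G.TStep1

/-- The talented monoid `M_E^{gr}`. -/
def TM := G.tcon.Quotient

instance : AddCommMonoid G.TM := inferInstanceAs (AddCommMonoid G.tcon.Quotient)

/-- The generator `v(i)` of the talented monoid. -/
def tgen (v : V) (i : ℤ) : G.TM := G.tcon.mk' {(v, i)}

/-- The shift `v(i) ↦ v(i+n)` on the free commutative monoid `Multiset (V × ℤ)`. -/
def shiftMul (n : ℤ) : Multiset (V × ℤ) →+ Multiset (V × ℤ) where
  toFun a := a.map fun p => (p.1, p.2 + n)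
  map_zero' := rfl
  map_add' a b := Multiset.map_add (fun p => (p.1, p.2 + n)) a b

lemma shift_inj (n : ℤ) : Function.Injective (fun p : V × ℤ => (p.1, p.2 + n)) := by
  rintro ⟨a, b⟩ ⟨c, d⟩ h
  simp only [Prod.mk.injEq] at h
  exact Prod.ext h.1 (by omega)

lemma tstep1_shift (n : ℤ) {a b : Multiset (V × ℤ)} (h : G.TStep1 a b) :
    G.TStep1 (shiftMul n a) (shiftMul n b) := by
  obtain ⟨v, i, hv, hne, rfl⟩ := h
  refine ⟨v, i + n, Multiset.mem_map.2 ⟨(v, i), hv, rfl⟩, hne, ?_⟩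
  show Multiset.map _ _ = _
  rw [Multiset.map_add]
  congr 1
  · exact (Multiset.map_erase _ (shift_inj n) (v, i) a)
  · rw [Multiset.map_map]
    congr 1
    funext e
    simp only [Function.comp_apply]
    congr 1
    omega

lemma tcon_shift (n : ℤ) {a b : Multiset (V × ℤ)} (h : G.tcon a b) :
    G.tcon (shiftMul n a) (shiftMul n b) := by
  have hle : addConGen G.TStep1 ≤
      { r := fun a b => G.tcon (shiftMul n a) (shiftMul n b)
        iseqv := ⟨fun _ => G.tcon.refl _, fun h => G.tcon.symm h,
          fun h₁ h₂ => G.tcon.trans h₁ h₂⟩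
        add' := fun h₁ h₂ => by
          simpa only [map_add] using G.tcon.add h₁ h₂ } := by
    refine AddCon.addConGen_le.2 fun x y hxy => ?_
    exact AddConGen.Rel.of _ _ (G.tstep1_shift n hxy)
  exact hle h

/-- The `ℤ`-action on the talented monoid, `ⁿ(v(i)) = v(i+n)`. -/
def tshift (n : ℤ) : G.TM →+ G.TM :=
  G.tcon.lift (G.tcon.mk'.comp (shiftMul n)) (by
    intro a b h
    show G.tcon.mk' (shiftMul n a) = G.tcon.mk' (shiftMul n b)
    exact (AddCon.eq _).2 (G.tcon_shift n h))

/-- Reachability: there is a (possibly trivial) path from `u` to `v`. -/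
def Reaches (u v : V) : Prop :=
  Relation.ReflTransGen (fun a b => ∃ e : Ed, G.s e = a ∧ G.r e = b) u v

/-- A cycle: a nonempty path of edges, closed up, with distinct source vertices. -/
def IsCycle (p : List Ed) : Prop :=
  ∃ h : p ≠ [], List.Chain' (fun e f => G.r e = G.s f) p ∧
    G.r (p.getLast h) = G.s (p.head h) ∧ (p.map G.s).Nodup

/-- The cycle `p` has an exit: some vertex on it emits an edge not on the cycle. -/
def HasExit (p : List Ed) : Prop :=
  ∃ e : Ed, (∃ f ∈ p, G.s e = G.s f) ∧ e ∉ p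

/-- The cycle `p` has no exit: every vertex on it emits exactly its cycle edge. -/
def NoExit (p : List Ed) : Prop :=
  ∀ e ∈ p, G.emit (G.s e) = {e}

/-- `ℤ`-order-ideals of the talented monoid. -/
def IsOrderIdeal (I : Set G.TM) : Prop :=
  (0 : G.TM) ∈ I ∧ (∀ a b : G.TM, a ∈ I → b ∈ I → a + b ∈ I) ∧
    (∀ (n : ℤ) (a : G.TM), a ∈ I → G.tshift n a ∈ I) ∧
    (∀ a b : G.TM, algLE a b → b ∈ I → a ∈ I)

/-- The smallest `ℤ`-order-ideal of `M_E^{gr}` containing `v(0)`. -/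
def genIdeal (v : V) : Set G.TM :=
  ⋂₀ {I : Set G.TM | G.IsOrderIdeal I ∧ G.tgen v 0 ∈ I}

/-- Minimality in the talented monoid: `0 ≠ b ≤ a` implies `a ≤ b`. -/
def TMin (a : G.TM) : Prop := ∀ b : G.TM, b ≠ 0 → algLE b a → algLE a b

/-- The covering graph `\bar E`. -/
def cover : RFGraph (V × ℤ) (Ed × ℤ) where
  s p := (G.s p.1, p.2)
  r p := (G.r p.1, p.2 + 1)
  emit p := (G.emit p.1).map ⟨fun e => (e, p.2), fun a b h => by
    simpa using congrArg Prod.fst h⟩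
  mem_emit := by
    rintro ⟨e, n⟩ ⟨v, m⟩
    simp only [Finset.mem_map, Function.Embedding.coeFn_mk, Prod.mk.injEq, G.mem_emit]
    constructor
    · rintro ⟨a, ha, rfl, rfl⟩; exact ⟨ha, rfl⟩
    · rintro ⟨rfl, rfl⟩; first | exact ⟨e, rfl, rfl, rfl⟩ | exact ⟨e, rfl, rfl⟩ | exact ⟨e, by simp⟩

/-- The set of vertices on a cycle. -/
def cycVerts (p : List Ed) : Set V := {v | ∃ e ∈ p, G.s e = v}

end RFGraph

/-!
Firing once around a cycle of length `k` based at `v` gives `v(0) = v(k) + y` in `M_E^{gr}`,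
where `y` collects the edges leaving the cycle; so `⁻ᵏv(k) = v(k) + y`, and `y ≠ 0` when the
cycle has an exit.

Conversely, suppose no cycle has an exit and `ⁿa = a + x` with `n < 0`, `x ≠ 0`. Firing one
occurrence of a vertex is a confluent rewriting system presenting `M_E^{gr}`, so the equation
is witnessed by firings at a finite set `S` of sites. Counting, for each vertex, the walks
through `S` that stop at their first cycle vertex gives a shift-invariant weight preserved by
firing at `S` (exitless cycles merely rotate), whence `x` has weight `0`. Iterating
`a ~ ᵐ(a + x)` with `m = -n` shows that `a` fires into configurations containing descendants
of `x` shifted arbitrarily high. An element that high has come along a walk through `S` longer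
than `|S|`, so it sits on a cycle and gives a descendant of `x` positive weight.
-/

namespace RFGraph

variable {V Ed : Type} {G : RFGraph V Ed}

section Walks

variable (G) in
def IsWalk : List Ed → V → V → Prop
  | [], v, w => v = w
  | e :: p, v, w => G.s e = v ∧ IsWalk p (G.r e) w

lemma isWalk_append {p q : List Ed} {v w : V} :
    G.IsWalk (p ++ q) v w ↔ ∃ u, G.IsWalk p v u ∧ G.IsWalk q u w := by
  induction p generalizing v with
  | nil => exact ⟨fun h => ⟨v, rfl, h⟩, fun ⟨_, rfl, h⟩ => h⟩
  | cons e p ih =>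
    simp only [List.cons_append, IsWalk, ih]
    exact ⟨fun ⟨hv, u, hp, hq⟩ => ⟨u, ⟨hv, hp⟩, hq⟩, fun ⟨u, ⟨hv, hp⟩, hq⟩ => ⟨hv, u, hp, hq⟩⟩

lemma isWalk_iff_isChain {p : List Ed} (hp : p ≠ []) {v w : V} :
    G.IsWalk p v w ↔ List.IsChain (fun e f => G.r e = G.s f) p ∧
      G.s (p.head hp) = v ∧ G.r (p.getLast hp) = w := by
  induction p generalizing v with
  | nil => exact absurd rfl hp
  | cons e p ih =>
    rcases p with _ | ⟨f, p⟩
    · simp [IsWalk]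
    · rw [IsWalk, ih (List.cons_ne_nil f p), List.isChain_cons_cons]
      simp only [List.head_cons, List.getLast_cons_cons]
      constructor
      · rintro ⟨rfl, hc, hf, rfl⟩
        exact ⟨⟨hf.symm, hc⟩, rfl, rfl⟩
      · rintro ⟨⟨hf, hc⟩, rfl, rfl⟩
        exact ⟨rfl, hc, hf.symm, rfl⟩

lemma IsCycle.exists_isWalk {p : List Ed} (hc : G.IsCycle p) :
    ∃ hp : p ≠ [], G.IsWalk p (G.s (p.head hp)) (G.s (p.head hp)) := by
  obtain ⟨hp, hch, hcl, -⟩ := hc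
  exact ⟨hp, (isWalk_iff_isChain hp).2 ⟨hch, rfl, hcl⟩⟩

lemma isCycle_of_isWalk {p : List Ed} {u : V} (hp : p ≠ []) (hw : G.IsWalk p u u)
    (hnd : (p.map G.s).Nodup) : G.IsCycle p := by
  obtain ⟨hch, hu, hcl⟩ := (isWalk_iff_isChain hp).1 hw
  exact ⟨hp, hch, hcl.trans hu.symm, hnd⟩

lemma IsWalk.exists_closed_subwalk {p : List Ed} {v w : V} (hw : G.IsWalk p v w)
    (hnd : ¬(p.map G.s).Nodup) :
    ∃ q u, q ≠ [] ∧ G.IsWalk q u u ∧ q.length < p.length ∧ q ⊆ p := by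
  induction p generalizing v with
  | nil => simp at hnd
  | cons e p ih =>
    obtain ⟨rfl, hw⟩ := hw
    by_cases hmem : G.s e ∈ p.map G.s
    · obtain ⟨f, hf, hsf⟩ := List.mem_map.1 hmem
      obtain ⟨l₁, l₂, rfl⟩ := List.append_of_mem hf
      obtain ⟨u, hl₁, ⟨hfu, -⟩⟩ := isWalk_append.1 hw
      refine ⟨e :: l₁, G.s e, List.cons_ne_nil _ _, ⟨rfl, hsf ▸ hfu ▸ hl₁⟩, by simp, ?_⟩
      exact List.cons_subset_cons _ fun x hx => List.mem_append_left _ hx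
    · obtain ⟨q, u, hq, hqw, hlen, hsub⟩ :=
        ih hw fun hn => hnd (List.nodup_cons.2 ⟨hmem, hn⟩)
      exact ⟨q, u, hq, hqw, Nat.lt_succ_of_lt hlen,
        List.Subset.trans hsub (List.subset_cons_self _ _)⟩

lemma IsWalk.exists_isCycle_subset {p : List Ed} {v w : V} (hw : G.IsWalk p v w)
    (hnd : ¬(p.map G.s).Nodup) : ∃ c, G.IsCycle c ∧ c ⊆ p := by
  induction h : p.length using Nat.strong_induction_on generalizing p v w with
  | _ n ih =>
    obtain ⟨q, u, hq, hqw, hlen, hsub⟩ := hw.exists_closed_subwalk hnd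
    by_cases hqnd : (q.map G.s).Nodup
    · exact ⟨q, isCycle_of_isWalk hq hqw hqnd, hsub⟩
    · obtain ⟨c, hc, hcq⟩ := ih _ (h ▸ hlen) hqw hqnd rfl
      exact ⟨c, hc, List.Subset.trans hcq hsub⟩

end Walks

section Cycles

variable (G) in
def onCycle : Set V := {v | ∃ p, G.IsCycle p ∧ v ∈ G.cycVerts p}

lemma IsWalk.exists_source_mem_onCycle_of_card_lt [DecidableEq V] {p : List Ed} {v w : V}
    {S : Finset V} (hw : G.IsWalk p v w) (hS : ∀ e ∈ p, G.s e ∈ S) (hlen : S.card < p.length) :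
    ∃ e ∈ p, G.s e ∈ G.onCycle := by
  have hnd : ¬(p.map G.s).Nodup := fun hnd => by
    have := Finset.card_le_card (s := (p.map G.s).toFinset) fun u hu => by
      obtain ⟨e, he, rfl⟩ := List.mem_map.1 (List.mem_toFinset.1 hu)
      exact hS e he
    rw [List.toFinset_card_of_nodup hnd, List.length_map] at this
    omega
  obtain ⟨c, hc, hcp⟩ := hw.exists_isCycle_subset hnd
  obtain ⟨hc₀, -⟩ := id hc
  exact ⟨c.head hc₀, hcp (List.head_mem hc₀), c, hc, c.head hc₀, List.head_mem hc₀, rfl⟩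

lemma IsCycle.noExit {p : List Ed} (hc : G.IsCycle p) (hx : ¬G.HasExit p) : G.NoExit p := by
  intro f hf
  ext e
  rw [Finset.mem_singleton, G.mem_emit]
  refine ⟨fun he => ?_, fun hef => hef ▸ rfl⟩
  have hep : e ∈ p := by_contra fun hep => hx ⟨e, ⟨f, hf, he⟩, hep⟩
  exact List.inj_on_of_nodup_map hc.2.2.2 hep hf he

lemma IsCycle.exists_source_eq_range {p : List Ed} {f : Ed} (hc : G.IsCycle p) (hf : f ∈ p) :
    ∃ g ∈ p, G.s g = G.r f := by
  obtain ⟨hp, hw⟩ := hc.exists_isWalk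
  obtain ⟨l₁, l₂, rfl⟩ := List.append_of_mem hf
  obtain ⟨u, -, -, hl₂⟩ := isWalk_append.1 hw
  rcases l₂ with _ | ⟨g, l₂⟩
  · exact ⟨_, List.head_mem hp, hl₂.symm⟩
  · exact ⟨g, by simp, hl₂.1⟩

section NoExit

variable (hnoExit : ∀ p, G.IsCycle p → ¬G.HasExit p)
include hnoExit

lemma emit_eq_singleton_of_mem_onCycle {v : V} (hv : v ∈ G.onCycle) :
    ∃ e, G.emit v = {e} ∧ G.r e ∈ G.onCycle := by
  obtain ⟨p, hc, f, hf, rfl⟩ := hv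
  obtain ⟨g, hg, hgf⟩ := hc.exists_source_eq_range hf
  exact ⟨f, hc.noExit (hnoExit p hc) f hf, p, hc, g, hg, hgf⟩

lemma range_mem_onCycle {v : V} {e : Ed} (hv : v ∈ G.onCycle) (he : e ∈ G.emit v) :
    G.r e ∈ G.onCycle := by
  obtain ⟨f, hvf, hf⟩ := emit_eq_singleton_of_mem_onCycle hnoExit hv
  rw [hvf, Finset.mem_singleton] at he
  exact he ▸ hf

lemma IsWalk.mem_onCycle {p : List Ed} {v w : V} (hw : G.IsWalk p v w)
    (hv : v ∈ G.onCycle) : w ∈ G.onCycle := by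
  induction p generalizing v with
  | nil => exact hw ▸ hv
  | cons e p ih => exact ih hw.2 (range_mem_onCycle hnoExit hv ((G.mem_emit e v).2 hw.1))

lemma IsWalk.target_mem_onCycle_of_card_lt [DecidableEq V] {p : List Ed} {v w : V} {S : Finset V}
    (hw : G.IsWalk p v w) (hS : ∀ e ∈ p, G.s e ∈ S) (hlen : S.card < p.length) :
    w ∈ G.onCycle := by
  obtain ⟨e, he, hec⟩ := hw.exists_source_mem_onCycle_of_card_lt hS hlen
  obtain ⟨l₁, l₂, rfl⟩ := List.append_of_mem he
  obtain ⟨u, -, hu, hl₂⟩ := isWalk_append.1 hw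
  exact IsWalk.mem_onCycle hnoExit (p := e :: l₂) ⟨hu, hl₂⟩ (hu ▸ hec)

end NoExit

end Cycles

variable [DecidableEq V]

open Relation

section Rewriting

variable (G) in
def fire (v : V) (i : ℤ) : Multiset (V × ℤ) :=
  (G.emit v).val.map fun e => (G.r e, i + 1)

variable (G) in
def TStepOn (S : Set V) (a b : Multiset (V × ℤ)) : Prop :=
  ∃ v ∈ S, ∃ i, (v, i) ∈ a ∧ G.emit v ≠ ∅ ∧ b = a.erase (v, i) + G.fire v i

variable (G) in
abbrev TStepsOn (S : Set V) : Multiset (V × ℤ) → Multiset (V × ℤ) → Prop :=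
  ReflTransGen (G.TStepOn S)

variable {S T : Set V} {a b c d : Multiset (V × ℤ)}

lemma tStep1_iff_tStepOn_univ : G.TStep1 a b ↔ G.TStepOn Set.univ a b := by
  simp [TStep1, TStepOn, fire]

lemma TStepsOn.mono (hST : S ⊆ T) (h : G.TStepsOn S a b) : G.TStepsOn T a b :=
  ReflTransGen.mono (p := G.TStepOn T) (fun _ _ ⟨v, hv, hstep⟩ => ⟨v, hST hv, hstep⟩) _ _ h

lemma TStepOn.add_right (c : Multiset (V × ℤ)) (h : G.TStepOn S a b) :
    G.TStepOn S (a + c) (b + c) := by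
  obtain ⟨v, hv, i, hmem, hemit, rfl⟩ := h
  refine ⟨v, hv, i, Multiset.mem_add.2 (Or.inl hmem), hemit, ?_⟩
  rw [Multiset.erase_add_left_pos c hmem, add_right_comm]

lemma TStepsOn.add_right (c : Multiset (V × ℤ)) (h : G.TStepsOn S a b) :
    G.TStepsOn S (a + c) (b + c) :=
  ReflTransGen.lift (· + c) (fun _ _ hs => hs.add_right c) _ _ h

lemma TStepsOn.add (hab : G.TStepsOn S a b) (hcd : G.TStepsOn S c d) :
    G.TStepsOn S (a + c) (b + d) := by
  refine (hab.add_right c).trans ?_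
  simpa only [add_comm b] using hcd.add_right b

lemma shiftMul_apply (n : ℤ) (a : Multiset (V × ℤ)) :
    shiftMul n a = a.map fun p => (p.1, p.2 + n) :=
  rfl

lemma shiftMul_shiftMul (m n : ℤ) (a : Multiset (V × ℤ)) :
    shiftMul n (shiftMul m a) = shiftMul (m + n) a := by
  simp only [shiftMul_apply, Multiset.map_map, Function.comp_def, add_assoc]

lemma shiftMul_zero (a : Multiset (V × ℤ)) : shiftMul 0 a = a := by
  simp [shiftMul_apply]

lemma shiftMul_neg_shiftMul (n : ℤ) (a : Multiset (V × ℤ)) :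
    shiftMul (-n) (shiftMul n a) = a := by
  rw [shiftMul_shiftMul, add_neg_cancel, shiftMul_zero]

lemma shiftMul_shiftMul_neg (n : ℤ) (a : Multiset (V × ℤ)) :
    shiftMul n (shiftMul (-n) a) = a := by
  simpa only [neg_neg] using shiftMul_neg_shiftMul (-n) a

lemma shiftMul_fire (n : ℤ) (v : V) (i : ℤ) : shiftMul n (G.fire v i) = G.fire v (i + n) := by
  simp only [shiftMul_apply, fire, Multiset.map_map, Function.comp_def, add_right_comm]

lemma TStepOn.shiftMul (n : ℤ) (h : G.TStepOn S a b) :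
    G.TStepOn S (shiftMul n a) (shiftMul n b) := by
  obtain ⟨v, hv, i, hmem, hemit, rfl⟩ := h
  refine ⟨v, hv, i + n, Multiset.mem_map.2 ⟨(v, i), hmem, rfl⟩, hemit, ?_⟩
  rw [map_add, shiftMul_fire, shiftMul_apply, shiftMul_apply,
    Multiset.map_erase _ (shift_inj n)]

lemma TStepsOn.shiftMul (n : ℤ) (h : G.TStepsOn S a b) :
    G.TStepsOn S (shiftMul n a) (shiftMul n b) :=
  ReflTransGen.lift _ (fun _ _ hs => hs.shiftMul n) _ _ h

lemma TStepOn.ne_zero_left (h : G.TStepOn S a b) : a ≠ 0 := by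
  obtain ⟨v, -, i, hmem, -⟩ := h
  rintro rfl
  exact Multiset.notMem_zero _ hmem

lemma TStepOn.ne_zero (h : G.TStepOn S a b) : b ≠ 0 := by
  obtain ⟨v, -, i, -, hemit, rfl⟩ := h
  intro h0
  simp [fire, hemit] at h0

lemma TStepsOn.ne_zero (h : G.TStepsOn S a b) (ha : a ≠ 0) : b ≠ 0 := by
  induction h with
  | refl => exact ha
  | tail _ hs _ => exact hs.ne_zero

lemma TStepsOn.eq_zero (h : G.TStepsOn S 0 b) : b = 0 := by
  induction h with
  | refl => rfl
  | tail _ hs ih => exact absurd ih hs.ne_zero_left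

/-- Firings at distinct occurrences commute. -/
lemma TStepOn.diamond (hb : G.TStepOn S a b) (hc : G.TStepOn S a c) :
    ∃ d, ReflGen (G.TStepOn S) b d ∧ ReflTransGen (G.TStepOn S) c d := by
  obtain ⟨v, hv, i, hvi, hve, rfl⟩ := hb
  obtain ⟨w, hw, j, hwj, hwe, rfl⟩ := hc
  by_cases hvw : (v, i) = (w, j)
  · obtain ⟨rfl, rfl⟩ := Prod.mk.inj hvw
    exact ⟨_, ReflGen.refl, ReflTransGen.refl⟩
  have hwj' := (Multiset.mem_erase_of_ne (Ne.symm hvw)).2 hwj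
  have hvi' := (Multiset.mem_erase_of_ne hvw).2 hvi
  refine ⟨(a.erase (v, i)).erase (w, j) + G.fire v i + G.fire w j,
    ReflGen.single ⟨w, hw, j, Multiset.mem_add.2 (Or.inl hwj'), hwe, ?_⟩,
    ReflTransGen.single ⟨v, hv, i, Multiset.mem_add.2 (Or.inl hvi'), hve, ?_⟩⟩
  · rw [Multiset.erase_add_left_pos _ hwj']
  · rw [Multiset.erase_add_left_pos _ hvi', Multiset.erase_comm, add_right_comm]

variable (G) in
/-- Confluence (`TStepOn.diamond`) makes joinability transitive. -/
def joinCon (S : Set V) : AddCon (Multiset (V × ℤ)) where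
  r := Join (G.TStepsOn S)
  iseqv := equivalence_join_reflTransGen fun _ _ _ => TStepOn.diamond
  add' := fun ⟨u, hau, hbu⟩ ⟨w, hcw, hdw⟩ => ⟨u + w, hau.add hcw, hbu.add hdw⟩

lemma tcon_le_joinCon : G.tcon ≤ G.joinCon Set.univ :=
  AddCon.addConGen_le.2 fun _ _ h =>
    ⟨_, ReflTransGen.single (tStep1_iff_tStepOn_univ.1 h), ReflTransGen.refl⟩

lemma TStepsOn.tcon (h : G.TStepsOn S a b) : G.tcon a b := by
  induction h with
  | refl => exact G.tcon.refl _
  | tail _ hs ih =>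
    obtain ⟨v, -, hstep⟩ := hs
    exact G.tcon.trans ih (AddConGen.Rel.of _ _ (tStep1_iff_tStepOn_univ.2 ⟨v, trivial, hstep⟩))

lemma eq_zero_of_tcon_zero (h : G.tcon a 0) : a = 0 := by
  obtain ⟨c, hac, h0c⟩ := tcon_le_joinCon h
  by_contra ha
  exact hac.ne_zero ha (TStepsOn.eq_zero h0c)

lemma mk'_eq_zero_iff {y : Multiset (V × ℤ)} : (G.tcon.mk' y : G.TM) = 0 ↔ y = 0 := by
  refine ⟨fun h => eq_zero_of_tcon_zero ((AddCon.eq G.tcon).1 ?_), fun h => h ▸ map_zero _⟩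
  exact h.trans (map_zero G.tcon.mk').symm

lemma tshift_mk'_eq_add_iff {n : ℤ} {a x : Multiset (V × ℤ)} :
    G.tshift n (G.tcon.mk' a) = G.tcon.mk' a + G.tcon.mk' x ↔ G.tcon (shiftMul n a) (a + x) :=
  AddCon.eq _

lemma TStepsOn.exists_finset (h : G.TStepsOn Set.univ a b) :
    ∃ S : Finset V, G.TStepsOn ↑S a b := by
  induction h with
  | refl => exact ⟨∅, ReflTransGen.refl⟩
  | tail _ hs ih =>
    obtain ⟨S, hS⟩ := ih
    obtain ⟨v, -, hstep⟩ := hs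
    exact ⟨insert v S, (hS.mono (by simp)).tail ⟨v, by simp, hstep⟩⟩

lemma exists_finset_join_of_tcon (h : G.tcon a b) : ∃ S : Finset V, Join (G.TStepsOn ↑S) a b := by
  obtain ⟨c, h₁, h₂⟩ := tcon_le_joinCon h
  obtain ⟨S₁, h₁⟩ := h₁.exists_finset
  obtain ⟨S₂, h₂⟩ := h₂.exists_finset
  exact ⟨S₁ ∪ S₂, c, h₁.mono (by simp), h₂.mono (by simp)⟩

lemma TStepsOn.exists_add_eq (h : G.TStepsOn S (a + b) c) :
    ∃ a' b', c = a' + b' ∧ G.TStepsOn S a a' ∧ G.TStepsOn S b b' := by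
  induction h with
  | refl => exact ⟨a, b, rfl, ReflTransGen.refl, ReflTransGen.refl⟩
  | tail _ hs ih =>
    obtain ⟨a', b', rfl, ha, hb⟩ := ih
    obtain ⟨v, hv, i, hmem, hemit, rfl⟩ := hs
    rcases Multiset.mem_add.1 hmem with hmem | hmem
    · refine ⟨_, b', ?_, ha.tail ⟨v, hv, i, hmem, hemit, rfl⟩, hb⟩
      rw [Multiset.erase_add_left_pos _ hmem, add_right_comm]
    · refine ⟨a', _, ?_, ha, hb.tail ⟨v, hv, i, hmem, hemit, rfl⟩⟩
      rw [Multiset.erase_add_right_pos _ hmem, add_assoc]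

lemma TStepsOn.exists_isWalk (h : G.TStepsOn S a b) {w : V} {t : ℤ} (hw : (w, t) ∈ b) :
    ∃ u s p, (u, s) ∈ a ∧ G.IsWalk p u w ∧ s + p.length = t ∧ ∀ e ∈ p, G.s e ∈ S := by
  induction h generalizing w t with
  | refl => exact ⟨w, t, [], hw, rfl, by simp, by simp⟩
  | tail _ hs ih =>
    obtain ⟨v, hv, i, hmem, -, rfl⟩ := hs
    rcases Multiset.mem_add.1 hw with hw | hw
    · exact ih (Multiset.mem_of_mem_erase hw)
    obtain ⟨e, he, hew⟩ := Multiset.mem_map.1 hw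
    obtain ⟨rfl, rfl⟩ := Prod.mk.inj hew
    have hev : G.s e = v := (G.mem_emit e v).1 he
    obtain ⟨u, s, p, hu, hp, hlen, hsrc⟩ := ih hmem
    refine ⟨u, s, p ++ [e], hu, isWalk_append.2 ⟨v, hp, hev, rfl⟩, ?_, ?_⟩
    · simp only [List.length_append, List.length_singleton]
      omega
    · intro f hf
      rcases List.mem_append.1 hf with hf | hf
      · exact hsrc f hf
      · rwa [List.mem_singleton.1 hf, hev]

end Rewriting

section Forward

/-- The remainder `y` collects the edges emitted along the walk besides the walk's own. -/
lemma IsWalk.exists_tStepsOn {p : List Ed} {v w : V} (hw : G.IsWalk p v w) (t : ℤ) :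
    ∃ y, G.TStepsOn Set.univ {(v, t)} ({(w, t + p.length)} + y) ∧
      ((∃ f ∈ p, ∃ e, G.s e = G.s f ∧ e ≠ f) → y ≠ 0) := by
  induction p generalizing v t with
  | nil =>
    cases hw
    exact ⟨0, by simpa using ReflTransGen.refl, by simp⟩
  | cons e p ih =>
    obtain ⟨rfl, hw⟩ := hw
    obtain ⟨y, hsteps, hy⟩ := ih hw (t + 1)
    have he : e ∈ G.emit (G.s e) := (G.mem_emit e _).2 rfl
    obtain ⟨others, hothers⟩ := Multiset.exists_cons_of_mem he
    set y₀ := others.map fun e => (G.r e, t + 1)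
    have hfire : G.TStepOn Set.univ {(G.s e, t)} ({(G.r e, t + 1)} + y₀) := by
      refine ⟨G.s e, trivial, t, Multiset.mem_singleton_self _, Finset.ne_empty_of_mem he, ?_⟩
      rw [Multiset.erase_singleton, zero_add, fire, hothers, Multiset.map_cons,
        Multiset.singleton_add]
    refine ⟨y + y₀, ReflTransGen.head hfire ?_, ?_⟩
    · have hlen : t + ((e :: p).length : ℤ) = t + 1 + p.length := by
        push_cast [List.length_cons]
        ring
      rw [hlen, ← add_assoc]
      exact hsteps.add_right y₀
    · rintro ⟨f, hf, e', hef, he'f⟩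
      rcases List.mem_cons.1 hf with rfl | hf
      · have he' : e' ∈ (G.emit (G.s f)).val := (G.mem_emit e' _).2 hef
        rw [hothers, Multiset.mem_cons] at he'
        exact fun h0 => Multiset.notMem_zero e'
          (Multiset.map_eq_zero.1 (add_eq_zero.1 h0).2 ▸ he'.resolve_left he'f)
      · exact fun h0 => hy ⟨f, hf, e', hef, he'f⟩ (add_eq_zero.1 h0).1

lemma exists_tshift_neg_eq_add_of_hasExit {p : List Ed} (hc : G.IsCycle p) (hx : G.HasExit p) :
    ∃ (a : G.TM) (n : ℤ) (x : G.TM), n < 0 ∧ x ≠ 0 ∧ G.tshift n a = a + x := by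
  obtain ⟨hp, hw⟩ := hc.exists_isWalk
  obtain ⟨y, hsteps, hy⟩ := hw.exists_tStepsOn 0
  obtain ⟨e, ⟨f, hf, hef⟩, hep⟩ := hx
  refine ⟨G.tgen (G.s (p.head hp)) p.length, -p.length, G.tcon.mk' y,
    by simpa using List.length_pos_iff.2 hp, fun hy0 => ?_, ?_⟩
  · exact hy ⟨f, hf, e, hef, fun h => hep (h ▸ hf)⟩ (mk'_eq_zero_iff.1 hy0)
  · refine tshift_mk'_eq_add_iff.2 ?_
    simpa [shiftMul_apply] using hsteps.tcon

end Forward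

section Weight

open Classical in
variable (G) in
/-- `cycleReach S k w` counts the walks of length at most `k` from `w` that run through sites
in `S` off the cycles and stop at their first vertex on a cycle. -/
noncomputable def cycleReach (S : Finset V) : ℕ → V → ℕ
  | 0, w => if w ∈ G.onCycle then 1 else 0
  | k + 1, w => if w ∈ S ∧ w ∉ G.onCycle then ∑ e ∈ G.emit w, cycleReach S k (G.r e)
      else if w ∈ G.onCycle then 1 else 0

variable {S : Finset V}

lemma cycleReach_succ_of_mem {k : ℕ} {w : V} (hS : w ∈ S) (hw : w ∉ G.onCycle) :
    G.cycleReach S (k + 1) w = ∑ e ∈ G.emit w, G.cycleReach S k (G.r e) := by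
  simp [cycleReach, hS, hw]

lemma cycleReach_eq_cycleReach_zero {k : ℕ} {w : V} (hw : ¬(w ∈ S ∧ w ∉ G.onCycle)) :
    G.cycleReach S k w = G.cycleReach S 0 w := by
  cases k <;> simp [cycleReach, hw]

lemma cycleReach_of_mem_onCycle {k : ℕ} {w : V} (hw : w ∈ G.onCycle) :
    G.cycleReach S k w = 1 := by
  rw [cycleReach_eq_cycleReach_zero (by tauto)]
  simp [cycleReach, hw]

lemma mem_and_notMem_onCycle_of_cycleReach_ne {k l : ℕ} {w : V}
    (h : G.cycleReach S k w ≠ G.cycleReach S l w) : w ∈ S ∧ w ∉ G.onCycle := by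
  by_contra hw
  exact h ((cycleReach_eq_cycleReach_zero hw).trans (cycleReach_eq_cycleReach_zero hw).symm)

lemma exists_isWalk_of_cycleReach_succ_ne {k : ℕ} {w : V}
    (h : G.cycleReach S (k + 1) w ≠ G.cycleReach S k w) :
    ∃ p u, G.IsWalk p w u ∧ p.length = k + 1 ∧ ∀ e ∈ p, G.s e ∈ S ∧ G.s e ∉ G.onCycle := by
  have hw := mem_and_notMem_onCycle_of_cycleReach_ne h
  induction k generalizing w with
  | zero =>
    rw [cycleReach_succ_of_mem hw.1 hw.2] at h
    obtain ⟨e, he, -⟩ :=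
      Finset.exists_ne_zero_of_sum_ne_zero (h.trans_eq (by simp [cycleReach, hw.2]))
    have hew := (G.mem_emit e w).1 he
    exact ⟨[e], G.r e, ⟨hew, rfl⟩, rfl, by simpa [hew] using hw⟩
  | succ k ih =>
    rw [cycleReach_succ_of_mem hw.1 hw.2, cycleReach_succ_of_mem (k := k) hw.1 hw.2] at h
    obtain ⟨e, he, hne⟩ : ∃ e ∈ G.emit w,
        G.cycleReach S (k + 1) (G.r e) ≠ G.cycleReach S k (G.r e) := by
      by_contra! heq
      exact h (Finset.sum_congr rfl heq)
    obtain ⟨p, u, hp, hlen, hsrc⟩ := ih hne (mem_and_notMem_onCycle_of_cycleReach_ne hne)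
    have hew := (G.mem_emit e w).1 he
    exact ⟨e :: p, u, ⟨hew, hp⟩, by simp [hlen], List.forall_mem_cons.2 ⟨hew ▸ hw, hsrc⟩⟩

lemma cycleReach_card_succ (w : V) : G.cycleReach S (S.card + 1) w = G.cycleReach S S.card w := by
  by_contra h
  obtain ⟨p, u, hp, hlen, hsrc⟩ := exists_isWalk_of_cycleReach_succ_ne h
  obtain ⟨e, he, hec⟩ :=
    hp.exists_source_mem_onCycle_of_card_lt (fun e he => (hsrc e he).1) (by omega)
  exact (hsrc e he).2 hec

variable (G) in
noncomputable def vertexWeight (S : Finset V) (w : V) : ℕ :=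
  G.cycleReach S S.card w

variable (G) in
noncomputable def weight (S : Finset V) (a : Multiset (V × ℤ)) : ℕ :=
  (a.map fun q => G.vertexWeight S q.1).sum

lemma vertexWeight_of_mem_onCycle {w : V} (hw : w ∈ G.onCycle) : G.vertexWeight S w = 1 :=
  cycleReach_of_mem_onCycle hw

lemma vertexWeight_eq_sum {w : V} (hS : w ∈ S) (hw : w ∉ G.onCycle) :
    G.vertexWeight S w = ∑ e ∈ G.emit w, G.vertexWeight S (G.r e) := by
  rw [vertexWeight, ← cycleReach_card_succ, cycleReach_succ_of_mem hS hw]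
  rfl

lemma weight_add (a b : Multiset (V × ℤ)) : G.weight S (a + b) = G.weight S a + G.weight S b := by
  simp [weight]

lemma weight_shiftMul (n : ℤ) (a : Multiset (V × ℤ)) :
    G.weight S (shiftMul n a) = G.weight S a := by
  simp [weight, shiftMul_apply]

lemma weight_fire (v : V) (i : ℤ) :
    G.weight S (G.fire v i) = ∑ e ∈ G.emit v, G.vertexWeight S (G.r e) := by
  simp only [weight, fire, Multiset.map_map, Function.comp_def]
  rfl

lemma notMem_onCycle_of_weight_eq_zero {a : Multiset (V × ℤ)} {w : V} {t : ℤ}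
    (ha : G.weight S a = 0) (hw : (w, t) ∈ a) : w ∉ G.onCycle := fun hwc => by
  have := Multiset.le_sum_of_mem (Multiset.mem_map_of_mem (fun q => G.vertexWeight S q.1) hw)
  rw [← weight, ha, vertexWeight_of_mem_onCycle hwc] at this
  exact absurd this (by norm_num)

section NoExit

variable (hnoExit : ∀ p, G.IsCycle p → ¬G.HasExit p)
include hnoExit

lemma vertexWeight_eq_sum_of_noExit {v : V} (hv : v ∈ S) :
    G.vertexWeight S v = ∑ e ∈ G.emit v, G.vertexWeight S (G.r e) := by
  by_cases hvc : v ∈ G.onCycle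
  · obtain ⟨e, he, hec⟩ := emit_eq_singleton_of_mem_onCycle hnoExit hvc
    rw [he, Finset.sum_singleton, vertexWeight_of_mem_onCycle hvc, vertexWeight_of_mem_onCycle hec]
  · exact vertexWeight_eq_sum hv hvc

lemma TStepOn.weight_eq {a b : Multiset (V × ℤ)} (h : G.TStepOn S a b) :
    G.weight S b = G.weight S a := by
  obtain ⟨v, hv, i, hmem, -, rfl⟩ := h
  conv_rhs => rw [← Multiset.cons_erase hmem]
  rw [weight_add, weight_fire, ← vertexWeight_eq_sum_of_noExit hnoExit hv, weight, weight,
    Multiset.map_cons, Multiset.sum_cons, add_comm]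

lemma TStepsOn.weight_eq {a b : Multiset (V × ℤ)} (h : G.TStepsOn S a b) :
    G.weight S b = G.weight S a := by
  induction h with
  | refl => rfl
  | tail _ hs ih => exact (hs.weight_eq hnoExit).trans ih

end NoExit

end Weight

section Backward

variable {S : Set V}

lemma exists_tStepsOn_shiftMul_of_join {a x : Multiset (V × ℤ)} {m : ℤ} (hm : 0 < m)
    (hJ : Join (G.TStepsOn S) a (shiftMul m (a + x))) (K : ℕ) :
    ∃ ξ r N, (K : ℤ) < N ∧ G.TStepsOn S x ξ ∧ G.TStepsOn S a (shiftMul N ξ + r) := by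
  have unfold : ∀ g, G.TStepsOn S a g → ∃ a₁ x₁, G.TStepsOn S a a₁ ∧ G.TStepsOn S x x₁ ∧
      G.TStepsOn S g (shiftMul m (a₁ + x₁)) := by
    intro g hg
    obtain ⟨c, hac, hc⟩ := hJ
    obtain ⟨d, hgd, hcd⟩ := church_rosser (fun _ _ _ => TStepOn.diamond) hg hac
    have hd := TStepsOn.shiftMul (-m) (hc.trans hcd)
    rw [shiftMul_neg_shiftMul] at hd
    obtain ⟨a₁, x₁, hd, ha₁, hx₁⟩ := hd.exists_add_eq
    refine ⟨a₁, x₁, ha₁, hx₁, ?_⟩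
    rwa [← hd, shiftMul_shiftMul_neg]
  have key : ∀ K : ℕ, ∃ g ξ r N, (K : ℤ) < N ∧ G.TStepsOn S a g ∧ G.TStepsOn S x ξ ∧
      G.TStepsOn S a (shiftMul N (g + ξ) + r) := by
    intro K
    induction K with
    | zero =>
      obtain ⟨a₁, x₁, ha₁, hx₁, ha⟩ := unfold a ReflTransGen.refl
      exact ⟨a₁, x₁, 0, m, by simpa using hm, ha₁, hx₁, by simpa using ha⟩
    | succ K ih =>
      obtain ⟨g, ξ, r, N, hN, hg, -, ha⟩ := ih
      obtain ⟨a₁, x₁, ha₁, hx₁, hg'⟩ := unfold g hg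
      refine ⟨a₁, x₁, shiftMul N ξ + r, N + m, by push_cast; omega, ha₁, hx₁, ?_⟩
      have := (hg'.shiftMul N).add_right (shiftMul N ξ + r)
      rw [shiftMul_shiftMul, add_comm m N, ← add_assoc, ← map_add] at this
      exact ha.trans this
  obtain ⟨g, ξ, r, N, hN, -, hξ, ha⟩ := key K
  refine ⟨ξ, shiftMul N g + r, N, hN, hξ, ?_⟩
  rwa [map_add, add_comm (shiftMul N g), add_assoc] at ha

section NoExit

variable (hnoExit : ∀ p, G.IsCycle p → ¬G.HasExit p)
include hnoExit

/-- Levels rise only by firing, so `w(t)` has come along a walk through `S` longer than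
`S.card`; such a walk enters a cycle, which it cannot leave. -/
lemma TStepsOn.mem_onCycle_of_lt {S : Finset V} {a d : Multiset (V × ℤ)}
    (h : G.TStepsOn S a d) {w : V} {t : ℤ} (hw : (w, t) ∈ d)
    (ht : ∀ q ∈ a, q.2 + S.card < t) : w ∈ G.onCycle := by
  obtain ⟨u, s, p, hu, hp, hlen, hsrc⟩ := h.exists_isWalk hw
  have := ht _ hu
  exact hp.target_mem_onCycle_of_card_lt hnoExit hsrc (by omega)

lemma not_tcon_shiftMul_self_add {n : ℤ} (hn : n < 0) {a x : Multiset (V × ℤ)} (hx : x ≠ 0) :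
    ¬G.tcon (shiftMul n a) (a + x) := by
  intro h
  obtain ⟨S, c, h₁, h₂⟩ := exists_finset_join_of_tcon h
  have hwx : G.weight S x = 0 := by
    have := (h₁.weight_eq hnoExit).symm.trans (h₂.weight_eq hnoExit)
    rw [weight_shiftMul, weight_add] at this
    omega
  have hJ : Join (G.TStepsOn S) a (shiftMul (-n) (a + x)) := by
    refine ⟨shiftMul (-n) c, ?_, h₂.shiftMul (-n)⟩
    simpa only [shiftMul_neg_shiftMul] using h₁.shiftMul (-n)
  obtain ⟨B, hB⟩ := Finset.exists_le (((a + x).map fun q => |q.2|).toFinset)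
  have hB' : ∀ q ∈ a + x, |q.2| ≤ B := fun q hq =>
    hB _ (Multiset.mem_toFinset.2 (Multiset.mem_map_of_mem _ hq))
  obtain ⟨ξ, r, N, hN, hxξ, haξ⟩ :=
    exists_tStepsOn_shiftMul_of_join (by omega) hJ (2 * B + S.card).toNat
  obtain ⟨⟨w, t⟩, hwt⟩ := Multiset.exists_mem_of_ne_zero (hxξ.ne_zero hx)
  obtain ⟨u, s, p, hus, -, hst, -⟩ := hxξ.exists_isWalk hwt
  refine notMem_onCycle_of_weight_eq_zero ((hxξ.weight_eq hnoExit).trans hwx) hwt ?_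
  refine haξ.mem_onCycle_of_lt hnoExit (t := t + N) (Multiset.mem_add.2 (Or.inl ?_)) fun q hq => ?_
  · exact Multiset.mem_map_of_mem _ hwt
  · have hq := abs_le.1 (hB' q (Multiset.mem_add.2 (Or.inl hq)))
    have hs := abs_le.1 (hB' _ (Multiset.mem_add.2 (Or.inr hus)))
    simp only at hq hs
    omega

end NoExit

end Backward

end RFGraph

/-- The graph `E` has a cycle with an exit if and only if there are `a ∈ M_E^{gr}`
and a negative integer `n` with `ⁿa > a`, i.e. `ⁿa = a + x` for some nonzero `x`. -/
theorem cycle_with_exit_iff {V Ed : Type} [DecidableEq V] (G : RFGraph V Ed) :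
    (∃ p : List Ed, G.IsCycle p ∧ G.HasExit p) ↔
      ∃ (a : G.TM) (n : ℤ) (x : G.TM), n < 0 ∧ x ≠ 0 ∧ G.tshift n a = a + x := by
  refine ⟨fun ⟨p, hc, hx⟩ => RFGraph.exists_tshift_neg_eq_add_of_hasExit hc hx, ?_⟩
  rintro ⟨a, n, x, hn, hx, h⟩
  by_contra! hnoExit
  obtain ⟨a, rfl⟩ := AddCon.mk'_surjective a
  obtain ⟨x, rfl⟩ := AddCon.mk'_surjective x
  exact RFGraph.not_tcon_shiftMul_self_add hnoExit hn (mt RFGraph.mk'_eq_zero_iff.2 hx)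
    (RFGraph.tshift_mk'_eq_add_iff.1 h)
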